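/- Let (T₁, r) and (T₂, r) be finite rooted trees with V(T₁) ∩ V(T₂) = {r}, and let T be their union, rooted at r. Let S₁ ⊆ V(T₁) ∖ {r} have reduced characteristic (δ₁, β₁) in (T₁, r) and let S₂ ⊆ V(T₂) ∖ {r} have reduced characteristic (δ₂, β₂) in (T₂, r). Then the reduced characteristic (δ, β) of S₁ ∪ S₂ in (T, r) satisfies δ = min(2, δ₁ + δ₂) and, for each i ∈ {0,1}, β(i) = 1 if and only if β₁(i) = 1 and β₂(i) = 1. -/

import Mathlib

open Finset

variable {V : Type*}

/-- `M` is a vertex cover of `(T with vertex set A) − S`: `M ⊆ A \ S` and every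
edge of `T` with both endpoints outside `S` has an endpoint in `M`. -/
def IsVCDel [DecidableEq V] (T : SimpleGraph V) (A S M : Finset V) : Prop :=
  M ⊆ A \ S ∧ ∀ ⦃u v : V⦄, T.Adj u v → u ∉ S → v ∉ S → u ∈ M ∨ v ∈ M

/-- A vertex cover of type `i ∈ {0,1}` of `(T with vertex set A) − S`, relative
to the root `r`: type 1 covers contain `r`, type 0 covers do not. -/
def IsTypedVC [DecidableEq V] (T : SimpleGraph V) (A S : Finset V) (r : V) (i : Fin 2)
    (M : Finset V) : Prop :=
  IsVCDel T A S M ∧ (i = 1 ↔ r ∈ M)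

/-- `(α, β)` is the characteristic of `S` in the rooted tree `(T, A, r)`:
for each `i ∈ {0,1}`, `α i` is the minimum reduced size `|M \ {r}|` of a
vertex cover `M` of type `i` of `T − S`, and `β i = 1` iff there is exactly one
vertex cover of type `i` with reduced size `α i` (and `β i = 2` otherwise). -/
def IsCharacteristic [DecidableEq V] (T : SimpleGraph V) (A S : Finset V) (r : V)
    (α β : Fin 2 → ℕ) : Prop :=
  ∀ i : Fin 2,
    (∃ M, IsTypedVC T A S r i M ∧ (M.erase r).card = α i) ∧
    (∀ M, IsTypedVC T A S r i M → α i ≤ (M.erase r).card) ∧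
    (β i = 1 ∨ β i = 2) ∧
    (β i = 1 ↔ ∃! M, IsTypedVC T A S r i M ∧ (M.erase r).card = α i)

/-- `(T, A, r)` is a finite rooted tree: the root `r` lies in the vertex set `A`,
all edges of `T` are inside `A`, and the induced graph on `A` is a tree. -/
def IsRootedTree [DecidableEq V] (T : SimpleGraph V) (A : Finset V) (r : V) : Prop :=
  r ∈ A ∧ (∀ ⦃u v : V⦄, T.Adj u v → u ∈ A ∧ v ∈ A) ∧
    (SimpleGraph.induce (↑A : Set V) T).IsTree

/-- `(T with vertex set A) − S` has a unique minimum vertex cover. -/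
def HasUniqueMinVC [DecidableEq V] (T : SimpleGraph V) (A S : Finset V) : Prop :=
  ∃! M : Finset V, IsVCDel T A S M ∧ ∀ M', IsVCDel T A S M' → M.card ≤ M'.card

/-- `(δ, β)` is the reduced characteristic of `S` in the rooted tree `(T, A, r)`:
`δ = min 2 (α 0 - α 1)` where `(α, β)` is the characteristic of `S`. -/
def IsReducedCharacteristic [DecidableEq V] (T : SimpleGraph V) (A S : Finset V) (r : V)
    (δ : ℕ) (β : Fin 2 → ℕ) : Prop :=
  ∃ α : Fin 2 → ℕ, IsCharacteristic T A S r α β ∧ δ = min 2 (α 0 - α 1)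

/-!
A vertex cover of the union, restricted to `A₁` and to `A₂`, gives vertex covers of the two
trees of the same type, and conversely two covers of the same type glue to a cover of the
union. Since the trees share only the root, this is a bijection under which reduced sizes
add. Hence `α = α₁ + α₂`, and the minimum of the union is attained uniquely exactly when both
minima are attained uniquely. As `α 1 ≤ α 0` in each tree, the truncated differences add as well.
-/

section ProductMinimization

variable {X Y Z : Type*}

theorem existsUnique_prod_and {p : X → Prop} {q : Y → Prop} :
    (∃! z : X × Y, p z.1 ∧ q z.2) ↔ (∃! x, p x) ∧ ∃! y, q y := by
  constructor
  · rintro ⟨⟨x, y⟩, ⟨hx, hy⟩, huniq⟩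
    exact ⟨⟨x, hx, fun x' hx' => congrArg Prod.fst (huniq (x', y) ⟨hx', hy⟩)⟩,
      ⟨y, hy, fun y' hy' => congrArg Prod.snd (huniq (x, y') ⟨hx, hy'⟩)⟩⟩
  · rintro ⟨⟨x, hx, hxu⟩, ⟨y, hy, hyu⟩⟩
    exact ⟨(x, y), ⟨hx, hy⟩, fun z hz => Prod.ext (hxu _ hz.1) (hyu _ hz.2)⟩

theorem existsUnique_subtype_and {p q : X → Prop} :
    (∃! x : Subtype p, q x) ↔ ∃! x, p x ∧ q x := by
  constructor
  · rintro ⟨⟨x, hp⟩, hq, huniq⟩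
    exact ⟨x, ⟨hp, hq⟩, fun y hy => congrArg Subtype.val (huniq ⟨y, hy.1⟩ hy.2)⟩
  · rintro ⟨x, ⟨hp, hq⟩, huniq⟩
    exact ⟨⟨x, hp⟩, hq, fun y hy => Subtype.ext (huniq y ⟨y.2, hy⟩)⟩

variable {u : X → ℕ} {v : Y → ℕ} {w : Z → ℕ} {a b : ℕ}

theorem IsLeast.range_of_equiv_prod (e : X × Y ≃ Z) (he : ∀ p, w (e p) = u p.1 + v p.2)
    (ha : IsLeast (Set.range u) a) (hb : IsLeast (Set.range v) b) :
    IsLeast (Set.range w) (a + b) := by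
  obtain ⟨⟨x, rfl⟩, hx⟩ := ha
  obtain ⟨⟨y, rfl⟩, hy⟩ := hb
  refine ⟨⟨e (x, y), he (x, y)⟩, ?_⟩
  rintro _ ⟨z, rfl⟩
  obtain ⟨p, rfl⟩ := e.surjective z
  rw [he]
  exact add_le_add (hx ⟨p.1, rfl⟩) (hy ⟨p.2, rfl⟩)

theorem existsUnique_eq_add_iff_of_equiv_prod (e : X × Y ≃ Z)
    (he : ∀ p, w (e p) = u p.1 + v p.2) (ha : IsLeast (Set.range u) a)
    (hb : IsLeast (Set.range v) b) :
    (∃! z, w z = a + b) ↔ (∃! x, u x = a) ∧ ∃! y, v y = b := by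
  rw [← existsUnique_prod_and]
  refine (e.existsUnique_congr fun p => ?_).symm
  have hx := ha.2 ⟨p.1, rfl⟩
  have hy := hb.2 ⟨p.2, rfl⟩
  rw [he]
  omega

end ProductMinimization

section VertexCover

variable [DecidableEq V] {T T₁ T₂ : SimpleGraph V} {A A₁ A₂ S S₁ S₂ M M₁ M₂ : Finset V} {r : V}

abbrev TypedVC (T : SimpleGraph V) (A S : Finset V) (r : V) (i : Fin 2) : Type _ :=
  {M : Finset V // IsTypedVC T A S r i M}

theorem IsVCDel.subset (h : IsVCDel T A S M) : M ⊆ A :=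
  fun _ hx => (mem_sdiff.1 (h.1 hx)).1

theorem IsVCDel.insert {x : V} (h : IsVCDel T A S M) (hxA : x ∈ A) (hxS : x ∉ S) :
    IsVCDel T A S (insert x M) :=
  ⟨insert_subset (mem_sdiff.2 ⟨hxA, hxS⟩) h.1,
    fun _ _ huv hu hv => (h.2 huv hu hv).imp mem_insert_of_mem mem_insert_of_mem⟩

theorem IsVCDel.inter_left (hE₁ : ∀ ⦃u v : V⦄, T₁.Adj u v → u ∈ A₁ ∧ v ∈ A₁)
    (hS₂ : Disjoint S₂ A₁) (h : IsVCDel (T₁ ⊔ T₂) A (S₁ ∪ S₂) M) :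
    IsVCDel T₁ A₁ S₁ (M ∩ A₁) := by
  refine ⟨fun x hx => ?_, fun u v huv hu hv => ?_⟩
  · obtain ⟨hxM, hxA⟩ := mem_inter.1 hx
    have hxS := (mem_sdiff.1 (h.1 hxM)).2
    exact mem_sdiff.2 ⟨hxA, fun hxS₁ => hxS (mem_union_left _ hxS₁)⟩
  · obtain ⟨huA, hvA⟩ := hE₁ huv
    have hnot : ∀ x ∈ A₁, x ∉ S₁ → x ∉ S₁ ∪ S₂ := fun x hxA hxS₁ hxS =>
      (mem_union.1 hxS).elim hxS₁ (disjoint_left.1 hS₂ · hxA)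
    exact (h.2 (Or.inl huv) (hnot u huA hu) (hnot v hvA hv)).imp
      (mem_inter.2 ⟨·, huA⟩) (mem_inter.2 ⟨·, hvA⟩)

theorem IsVCDel.inter_right (hE₂ : ∀ ⦃u v : V⦄, T₂.Adj u v → u ∈ A₂ ∧ v ∈ A₂)
    (hS₁ : Disjoint S₁ A₂) (h : IsVCDel (T₁ ⊔ T₂) A (S₁ ∪ S₂) M) :
    IsVCDel T₂ A₂ S₂ (M ∩ A₂) := by
  rw [sup_comm, union_comm] at h
  exact h.inter_left hE₂ hS₁

theorem IsVCDel.union (hS₁ : Disjoint S₁ A₂) (hS₂ : Disjoint S₂ A₁)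
    (h₁ : IsVCDel T₁ A₁ S₁ M₁) (h₂ : IsVCDel T₂ A₂ S₂ M₂) :
    IsVCDel (T₁ ⊔ T₂) (A₁ ∪ A₂) (S₁ ∪ S₂) (M₁ ∪ M₂) := by
  refine ⟨fun x hx => ?_, fun u v huv hu hv => ?_⟩
  · simp only [mem_union, mem_sdiff, not_or] at hx ⊢
    rcases hx with hx | hx
    · obtain ⟨hxA, hxS⟩ := mem_sdiff.1 (h₁.1 hx)
      exact ⟨Or.inl hxA, hxS, disjoint_right.1 hS₂ hxA⟩
    · obtain ⟨hxA, hxS⟩ := mem_sdiff.1 (h₂.1 hx)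
      exact ⟨Or.inr hxA, disjoint_right.1 hS₁ hxA, hxS⟩
  · simp only [mem_union, not_or] at hu hv ⊢
    rcases huv with huv | huv
    · exact (h₁.2 huv hu.1 hv.1).imp Or.inl Or.inl
    · exact (h₂.2 huv hu.2 hv.2).imp Or.inr Or.inr

theorem IsTypedVC.union_inter_left (hA : A₁ ∩ A₂ ⊆ {r})
    {i : Fin 2} (h₁ : IsTypedVC T₁ A₁ S₁ r i M₁) (h₂ : IsTypedVC T₂ A₂ S₂ r i M₂) :
    (M₁ ∪ M₂) ∩ A₁ = M₁ := by
  rw [union_inter_distrib_right, inter_eq_left.2 h₁.1.subset, union_eq_left]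
  intro x hx
  obtain ⟨hxM, hxA⟩ := mem_inter.1 hx
  obtain rfl := mem_singleton.1 (hA (mem_inter.2 ⟨hxA, h₂.1.subset hxM⟩))
  exact h₁.2.1 (h₂.2.2 hxM)

theorem IsTypedVC.union_inter_right (hA : A₁ ∩ A₂ ⊆ {r})
    {i : Fin 2} (h₁ : IsTypedVC T₁ A₁ S₁ r i M₁) (h₂ : IsTypedVC T₂ A₂ S₂ r i M₂) :
    (M₁ ∪ M₂) ∩ A₂ = M₂ := by
  rw [union_comm]
  exact h₂.union_inter_left (inter_comm A₂ A₁ ▸ hA) h₁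

theorem card_erase_union_of_inter_subset (h : M₁ ∩ M₂ ⊆ {r}) :
    ((M₁ ∪ M₂).erase r).card = (M₁.erase r).card + (M₂.erase r).card := by
  rw [erase_union_distrib, card_union_of_disjoint]
  refine disjoint_left.2 fun x hx₁ hx₂ => ?_
  rw [mem_erase] at hx₁ hx₂
  exact hx₁.1 (mem_singleton.1 (h (mem_inter.2 ⟨hx₁.2, hx₂.2⟩)))

theorem disjoint_of_subset_erase (hS : S ⊆ A₂.erase r) (hA : A₁ ∩ A₂ ⊆ {r}) :
    Disjoint S A₁ := by
  refine disjoint_left.2 fun x hxS hxA => ?_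
  obtain ⟨hxr, hxA₂⟩ := mem_erase.1 (hS hxS)
  exact hxr (mem_singleton.1 (hA (mem_inter.2 ⟨hxA, hxA₂⟩)))

section Join

variable (hE₁ : ∀ ⦃u v : V⦄, T₁.Adj u v → u ∈ A₁ ∧ v ∈ A₁)
  (hE₂ : ∀ ⦃u v : V⦄, T₂.Adj u v → u ∈ A₂ ∧ v ∈ A₂) (hr₁ : r ∈ A₁) (hr₂ : r ∈ A₂)
  (hA : A₁ ∩ A₂ ⊆ {r}) (hS₁ : Disjoint S₁ A₂) (hS₂ : Disjoint S₂ A₁)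

def typedVCJoinEquiv (i : Fin 2) :
    TypedVC T₁ A₁ S₁ r i × TypedVC T₂ A₂ S₂ r i ≃
      TypedVC (T₁ ⊔ T₂) (A₁ ∪ A₂) (S₁ ∪ S₂) r i where
  toFun M := ⟨M.1.1 ∪ M.2.1, M.1.2.1.union hS₁ hS₂ M.2.2.1,
    by rw [mem_union, ← M.1.2.2, ← M.2.2.2, or_self]⟩
  invFun M :=
    (⟨M.1 ∩ A₁, M.2.1.inter_left hE₁ hS₂, by rw [mem_inter, ← M.2.2, and_iff_left hr₁]⟩,
      ⟨M.1 ∩ A₂, M.2.1.inter_right hE₂ hS₁, by rw [mem_inter, ← M.2.2, and_iff_left hr₂]⟩)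
  left_inv M := Prod.ext (Subtype.ext (M.1.2.union_inter_left hA M.2.2))
    (Subtype.ext (M.1.2.union_inter_right hA M.2.2))
  right_inv M := Subtype.ext <|
    (inter_union_distrib_left _ _ _).symm.trans (inter_eq_left.2 M.2.1.subset)

theorem card_erase_typedVCJoinEquiv (i : Fin 2)
    (M : TypedVC T₁ A₁ S₁ r i × TypedVC T₂ A₂ S₂ r i) :
    ((typedVCJoinEquiv hE₁ hE₂ hr₁ hr₂ hA hS₁ hS₂ i M).1.erase r).card =
      (M.1.1.erase r).card + (M.2.1.erase r).card :=
  card_erase_union_of_inter_subset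
    ((inter_subset_inter M.1.2.1.subset M.2.2.1.subset).trans hA)

end Join

variable {α β : Fin 2 → ℕ}

theorem IsCharacteristic.isLeast (hc : IsCharacteristic T A S r α β) (i : Fin 2) :
    IsLeast (Set.range fun M : TypedVC T A S r i => (M.1.erase r).card) (α i) := by
  obtain ⟨⟨M, hM, hcard⟩, hmin, -⟩ := hc i
  exact ⟨⟨⟨M, hM⟩, hcard⟩, by rintro _ ⟨M, rfl⟩; exact hmin M.1 M.2⟩

theorem IsCharacteristic.beta_eq_one_iff (hc : IsCharacteristic T A S r α β) (i : Fin 2) :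
    β i = 1 ↔ ∃! M : TypedVC T A S r i, (M.1.erase r).card = α i :=
  (hc i).2.2.2.trans existsUnique_subtype_and.symm

theorem IsCharacteristic.alpha_one_le_alpha_zero (hc : IsCharacteristic T A S r α β)
    (hr : r ∈ A) (hrS : r ∉ S) : α 1 ≤ α 0 := by
  obtain ⟨M, hM, hcard⟩ := (hc 0).1
  have hrM : r ∉ M := fun h => absurd (hM.2.2 h) (by decide)
  have hins : IsTypedVC T A S r 1 (insert r M) := ⟨hM.1.insert hr hrS, by simp⟩
  calc α 1 ≤ ((insert r M).erase r).card := (hc 1).2.1 _ hins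
    _ = α 0 := by rw [erase_insert hrM, ← hcard, erase_eq_of_notMem hrM]

end VertexCover

theorem reduced_char_join_general [DecidableEq V]
    (T₁ T₂ : SimpleGraph V) (A₁ A₂ : Finset V) (r : V)
    (hT₁ : IsRootedTree T₁ A₁ r) (hT₂ : IsRootedTree T₂ A₂ r)
    (hInter : A₁ ∩ A₂ = {r})
    (S₁ S₂ : Finset V) (hS₁ : S₁ ⊆ A₁.erase r) (hS₂ : S₂ ⊆ A₂.erase r)
    (δ₁ δ₂ δ : ℕ) (β₁ β₂ β : Fin 2 → ℕ)
    (h₁ : IsReducedCharacteristic T₁ A₁ S₁ r δ₁ β₁)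
    (h₂ : IsReducedCharacteristic T₂ A₂ S₂ r δ₂ β₂)
    (h : IsReducedCharacteristic (T₁ ⊔ T₂) (A₁ ∪ A₂) (S₁ ∪ S₂) r δ β) :
    δ = min 2 (δ₁ + δ₂) ∧ ∀ i : Fin 2, (β i = 1 ↔ β₁ i = 1 ∧ β₂ i = 1) := by
  obtain ⟨α₁, hc₁, rfl⟩ := h₁
  obtain ⟨α₂, hc₂, rfl⟩ := h₂
  obtain ⟨α, hc, rfl⟩ := h
  obtain ⟨hr₁, hE₁, -⟩ := hT₁
  obtain ⟨hr₂, hE₂, -⟩ := hT₂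
  have hA₂₁ : A₂ ∩ A₁ ⊆ {r} := by rw [inter_comm, hInter]
  have hS₁A₂ := disjoint_of_subset_erase hS₁ hA₂₁
  have hS₂A₁ := disjoint_of_subset_erase hS₂ hInter.subset
  have hsize := card_erase_typedVCJoinEquiv hE₁ hE₂ hr₁ hr₂ hInter.subset hS₁A₂ hS₂A₁
  have hα : ∀ i, α i = α₁ i + α₂ i := fun i =>
    (hc.isLeast i).unique ((hc₁.isLeast i).range_of_equiv_prod _ (hsize i) (hc₂.isLeast i))
  refine ⟨?_, fun i => ?_⟩
  · have h₁₀ := hc₁.alpha_one_le_alpha_zero hr₁ fun h => notMem_erase r A₁ (hS₁ h)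
    have h₂₀ := hc₂.alpha_one_le_alpha_zero hr₂ fun h => notMem_erase r A₂ (hS₂ h)
    rw [hα 0, hα 1]
    omega
  · rw [hc.beta_eq_one_iff, hc₁.beta_eq_one_iff, hc₂.beta_eq_one_iff, hα i]
    exact existsUnique_eq_add_iff_of_equiv_prod _ (hsize i) (hc₁.isLeast i) (hc₂.isLeast i)

/-- Join of two rooted trees sharing only the root `r`: the reduced
characteristic of `S₁ ∪ S₂` in the union. -/
theorem reduced_char_join [Fintype V] [DecidableEq V]
    (T₁ T₂ : SimpleGraph V) (A₁ A₂ : Finset V) (r : V)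
    (hT₁ : IsRootedTree T₁ A₁ r) (hT₂ : IsRootedTree T₂ A₂ r)
    (hInter : A₁ ∩ A₂ = {r})
    (S₁ S₂ : Finset V) (hS₁ : S₁ ⊆ A₁.erase r) (hS₂ : S₂ ⊆ A₂.erase r)
    (δ₁ δ₂ δ : ℕ) (β₁ β₂ β : Fin 2 → ℕ)
    (h₁ : IsReducedCharacteristic T₁ A₁ S₁ r δ₁ β₁)
    (h₂ : IsReducedCharacteristic T₂ A₂ S₂ r δ₂ β₂)
    (h : IsReducedCharacteristic (T₁ ⊔ T₂) (A₁ ∪ A₂) (S₁ ∪ S₂) r δ β) :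
    δ = min 2 (δ₁ + δ₂) ∧ ∀ i : Fin 2, (β i = 1 ↔ β₁ i = 1 ∧ β₂ i = 1) :=
  reduced_char_join_general T₁ T₂ A₁ A₂ r hT₁ hT₂ hInter S₁ S₂ hS₁ hS₂ δ₁ δ₂ δ β₁ β₂ β h₁ h₂ h
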